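/- Two index tuples for an S_N-invariant tensor are related by a permutation of particle labels if and only if their associated labeled multigraphs are isomorphic, provided N is at least the number of vertices of either graph. -/

import Mathlib

/-- An index: a single particle label (loop) or an unordered pair of distinct labels. -/
abbrev Idx (N : ℕ) := Fin N ⊕ {p : Sym2 (Fin N) // ¬ p.IsDiag}

/-- The edge associated to an index. -/
def edgeOf {N : ℕ} : Idx N → Sym2 (Fin N)
  | Sum.inl i => s(i, i)
  | Sum.inr p => p.1

/-- Labels (vertices) occurring in an index tuple. -/
def labels {N R : ℕ} (t : Fin R → Idx N) : Set (Fin N) :=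
  {v | ∃ k, v ∈ edgeOf (t k)}

/-- Isomorphism of the labeled multigraphs of two index tuples: a map of vertex sets,
injective on the vertices of the first, carrying the edge of each slot to the edge of
the corresponding slot of the second. -/
def GraphIso {N R : ℕ} (t t' : Fin R → Idx N) : Prop :=
  ∃ f : Fin N → Fin N, Set.InjOn f (labels t) ∧
    ∀ k, Sym2.map f (edgeOf (t k)) = edgeOf (t' k)

/-- The action of a permutation of particle labels on an index. -/
def permIdx {N : ℕ} (σ : Equiv.Perm (Fin N)) : Idx N → Idx N
  | Sum.inl i => Sum.inl (σ i)
  | Sum.inr p => Sum.inr ⟨Sym2.map σ p.1, fun h => p.2 ((Sym2.isDiag_map σ.injective).mp h)⟩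

/-- The natural action of `S_N` on index tuples. -/
def permAction {N R : ℕ} (σ : Equiv.Perm (Fin N)) (t : Fin R → Idx N) : Fin R → Idx N :=
  fun k => permIdx σ (t k)

/-!
An index is determined by its edge (loops are exactly the diagonal edges), and a
permutation acts on edges by `Sym2.map`. So `σ` carries `t` to `t'` exactly when it maps
the edges of `t` to those of `t'` slot by slot. A graph isomorphism `f` does the same, and
since `f` is injective on the finite set `labels t`, it agrees there with some permutation
of `Fin N`; that permutation relates the two tuples.
-/

theorem Set.InjOn.exists_perm_eqOn {α : Type*} [Finite α] {f : α → α} {s : Set α}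
    (hf : Set.InjOn f s) : ∃ σ : Equiv.Perm α, Set.EqOn σ f s := by
  classical
  have := Fintype.ofFinite α
  refine ⟨(Equiv.Set.imageOfInjOn f s hf).extendSubtype, fun x hx => ?_⟩
  rw [Equiv.extendSubtype_apply_of_mem _ x hx]
  rfl

theorem edgeOf_injective {N : ℕ} : Function.Injective (edgeOf (N := N)) := by
  rintro (i | p) (j | q) h <;> simp only [edgeOf] at h
  · rw [Sym2.eq_iff] at h
    simp only [and_self, or_self] at h
    rw [h]
  · exact absurd (h ▸ Sym2.mk_isDiag_iff.mpr rfl) q.2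
  · exact absurd (h ▸ Sym2.mk_isDiag_iff.mpr rfl) p.2
  · rw [Subtype.ext h]

theorem edgeOf_permIdx {N : ℕ} (σ : Equiv.Perm (Fin N)) (x : Idx N) :
    edgeOf (permIdx σ x) = Sym2.map σ (edgeOf x) := by
  cases x <;> rfl

theorem permAction_eq_iff {N R : ℕ} (σ : Equiv.Perm (Fin N)) (t t' : Fin R → Idx N) :
    permAction σ t = t' ↔ ∀ k, Sym2.map σ (edgeOf (t k)) = edgeOf (t' k) := by
  simp only [funext_iff, permAction, ← edgeOf_permIdx, edgeOf_injective.eq_iff]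

theorem perm_related_iff_graphIso_general (N R : ℕ) (t t' : Fin R → Idx N) :
    (∃ σ : Equiv.Perm (Fin N), permAction σ t = t') ↔ GraphIso t t' := by
  simp only [permAction_eq_iff]
  constructor
  · rintro ⟨σ, hσ⟩
    exact ⟨σ, σ.injective.injOn, hσ⟩
  · rintro ⟨f, hinj, hf⟩
    obtain ⟨σ, hσf⟩ := hinj.exists_perm_eqOn
    refine ⟨σ, fun k => ?_⟩
    rw [← hf k]
    exact Sym2.map_congr fun x hx => hσf ⟨k, hx⟩

/-- Two index tuples are related by a permutation of the particle labels if and only if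
their associated labeled multigraphs are isomorphic, provided `N` is at least the
number of vertices of either graph. -/
theorem perm_related_iff_graphIso (N R : ℕ) (t t' : Fin R → Idx N)
    (hN : (labels t).ncard ≤ N ∧ (labels t').ncard ≤ N) :
    (∃ σ : Equiv.Perm (Fin N), permAction σ t = t') ↔ GraphIso t t' :=
  perm_related_iff_graphIso_general N R t t'
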